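/- arXiv:2404.00143 — 2 statements merged into one kernel-verified Lean document; each statement's English description precedes it below -/
import Mathlib

section
/- Let w1, w2 ≥ 1 and let g, h : S → ℝ≥0. Define f1(s) = g(s) + w1·h(s). For any finite nonempty set OPEN ⊆ S containing a node s0 with g(s0) + h(s0) ≤ C*, every node in FOCAL = {s ∈ OPEN | f1(s) ≤ w2 · min_{s'∈OPEN} f1(s')} satisfies f1(s) ≤ w1·w2·C*. In particular, if a goal node sg (with h(sg)=0) is in FOCAL, then g(sg) ≤ w1·w2·C*. -/
theorem stmt1 {S : Type*} (g h : S → ℝ) (hg : ∀ s, 0 ≤ g s) (hh : ∀ s, 0 ≤ h s)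
    (w1 w2 : ℝ) (hw1 : 1 ≤ w1) (hw2 : 1 ≤ w2) (Cstar : ℝ)
    (f1 : S → ℝ) (hf1 : ∀ s, f1 s = g s + w1 * h s)
    (OPEN : Finset S) (hne : OPEN.Nonempty)
    (s0 : S) (hs0 : s0 ∈ OPEN) (hadm : g s0 + h s0 ≤ Cstar) :
    (∀ s ∈ OPEN, f1 s ≤ w2 * OPEN.inf' hne f1 → f1 s ≤ w1 * w2 * Cstar) ∧
    (∀ sg ∈ OPEN, h sg = 0 → f1 sg ≤ w2 * OPEN.inf' hne f1 →
      g sg ≤ w1 * w2 * Cstar) := by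
  have hinf : OPEN.inf' hne f1 ≤ w1 * Cstar := by
    calc OPEN.inf' hne f1 ≤ f1 s0 := Finset.inf'_le f1 hs0
      _ = g s0 + w1 * h s0 := hf1 s0
      _ ≤ w1 * (g s0 + h s0) := by nlinarith [hg s0, hh s0]
      _ ≤ w1 * Cstar := by nlinarith [hg s0, hh s0]
  have key : ∀ s ∈ OPEN, f1 s ≤ w2 * OPEN.inf' hne f1 → f1 s ≤ w1 * w2 * Cstar := by
    intro s _ hfoc
    calc f1 s ≤ w2 * OPEN.inf' hne f1 := hfoc
      _ ≤ w2 * (w1 * Cstar) := by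
        apply mul_le_mul_of_nonneg_left hinf (by linarith)
      _ = w1 * w2 * Cstar := by ring
  refine ⟨key, fun sg hsg hh0 hfoc => ?_⟩
  have := key sg hsg hfoc
  rw [hf1 sg, hh0] at this
  linarith
end

section
/- Let OPEN be a finite nonempty set with priority f1 : S → ℝ and suppose throughout the run of a best-first search, expanded nodes s always satisfy f1(s) ≤ w₂·min_{s'∈OPEN} f1(s'). If f1(s) = g(s) + w₁·h(s) with h admissible (h(s) ≤ h*(s), the true cost-to-go) and some node s₀ on an optimal path remains in OPEN, then the first expanded goal node s_g (with h(s_g) = 0) satisfies g(s_g) ≤ w₁·w₂·C* where C* = g(s₀) + h*(s₀) is the optimal cost. -/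
theorem stmt10 {S : Type*} (g h hstar : S → ℝ)
    (hg : ∀ s, 0 ≤ g s) (hh : ∀ s, 0 ≤ h s) (hhs : ∀ s, 0 ≤ hstar s)
    (hadm : ∀ s, h s ≤ hstar s)
    (w1 w2 : ℝ) (hw1 : 1 ≤ w1) (hw2 : 1 ≤ w2)
    (f1 : S → ℝ) (hf1 : ∀ s, f1 s = g s + w1 * h s)
    (OPEN : Finset S) (hne : OPEN.Nonempty)
    (s0 : S) (hs0 : s0 ∈ OPEN) (Cstar : ℝ) (hopt : g s0 + hstar s0 = Cstar)
    (sg : S) (hgoal : h sg = 0) (hfocal : f1 sg ≤ w2 * OPEN.inf' hne f1) :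
    g sg ≤ w1 * w2 * Cstar := by
  have h1 : OPEN.inf' hne f1 ≤ f1 s0 := Finset.inf'_le _ hs0
  have h2 : f1 s0 ≤ w1 * Cstar := by
    rw [hf1, ← hopt]
    have := hadm s0
    nlinarith [hg s0, hhs s0]
  have hw2' : (0:ℝ) ≤ w2 := by linarith
  have : f1 sg ≤ w2 * (w1 * Cstar) := by
    calc f1 sg ≤ w2 * OPEN.inf' hne f1 := hfocal
    _ ≤ w2 * (w1 * Cstar) := by nlinarith
  rw [hf1, hgoal] at this
  nlinarith
end
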